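/- Let φ : ℍ → ℂ be injective holomorphic satisfying condition (4.2) with constant M ≥ 1 (with threshold 1) and suppose φ is an (H,α)-Hölder tract with threshold T₀ ≥ 1. Then there exist constants 0 < c ≤ C < ∞ such that for every T ≥ 1: c·|φ(T)| ≤ diam(φ(Q_T)) ≤ C·|φ(T)| and c·T·|φ′(T)| ≤ diam(φ(Q_T)) ≤ C·T·|φ′(T)|. -/

import Mathlib

open Complex Set

noncomputable section

/-- The open right half-plane `ℍ = {z ∈ ℂ : Re z > 0}`. -/
def HalfPlane : Set ℂ := {z : ℂ | 0 < z.re}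

/-- The open rectangle `Q_T = {ξ ∈ ℂ : 0 < Re ξ < 4T and −4T < Im ξ < 4T}`. -/
def Q (T : ℝ) : Set ℂ := {z : ℂ | 0 < z.re ∧ z.re < 4 * T ∧ -(4 * T) < z.im ∧ z.im < 4 * T}

/-- Condition (4.2) with constant `M` and threshold `γ`:
`|φ(ξ)| ≤ M·|φ(ξ′)|` for every `T ≥ γ` and all `ξ, ξ′ ∈ Q_T \ Q_{T/8}`. -/
def Cond42 (φ : ℂ → ℂ) (M γ : ℝ) : Prop :=
  ∀ T : ℝ, γ ≤ T → ∀ ξ ∈ Q T \ Q (T / 8), ∀ ξ' ∈ Q T \ Q (T / 8),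
    ‖φ ξ‖ ≤ M * ‖φ ξ'‖

/-- `φ` is an `(H,α)`-Hölder tract with threshold `T₀`:
`|φ(Tz₁) − φ(Tz₂)| ≤ H·T·|φ′(T)|·|z₁ − z₂|^α` for every `T ≥ T₀` and all `z₁, z₂ ∈ Q₁`. -/
def HolderTract (φ : ℂ → ℂ) (H α T₀ : ℝ) : Prop :=
  ∀ T : ℝ, T₀ ≤ T → ∀ z₁ ∈ Q 1, ∀ z₂ ∈ Q 1,
    ‖φ ((T : ℂ) * z₁) - φ ((T : ℂ) * z₂)‖ ≤
      H * T * ‖deriv φ (T : ℂ)‖ * (‖z₁ - z₂‖) ^ α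

/-!
For `T ≥ T₀` the Hölder condition bounds both `diam φ(Q_T)` and `|φ(T) - φ(1)|` by a multiple of
`T|φ'(T)|`. Conversely, Cauchy's estimate on the disc `D(T, T) ⊆ Q_T` gives
`T|φ'(T)| ≤ diam φ(Q_T)`, and on `D(T, T/2) ⊆ Q_T \ Q_{T/8}`, where (4.2) keeps `|φ|` below
`M|φ(T)|`, it gives `T|φ'(T)| ≤ 2(M+1)|φ(T)|`. Injectivity makes `diam φ(Q_T) ≥ |φ(1) - φ(2)| > 0`
and `φ' ≠ 0`, so on the compact range `1 ≤ T ≤ T₀` all three quantities are bounded above and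
below by positive constants.
-/

open Metric Filter Topology Asymptotics

lemma AnalyticAt.exists_analyticAt_pow_eq {g : ℂ → ℂ} {c : ℂ} (hg : AnalyticAt ℂ g c)
    (hgc : g c ≠ 0) {n : ℕ} (hn : n ≠ 0) :
    ∃ h : ℂ → ℂ, AnalyticAt ℂ h c ∧ h c ≠ 0 ∧ ∀ z, h z ^ n = g z := by
  obtain ⟨b, hb⟩ := IsAlgClosed.exists_pow_nat_eq (g c) (Nat.pos_of_ne_zero hn)
  refine ⟨fun z => b * (g z / g c) ^ (n⁻¹ : ℂ), ?_, ?_, fun z => ?_⟩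
  · refine analyticAt_const.mul ((hg.div analyticAt_const hgc).cpow analyticAt_const ?_)
    simp [div_self hgc]
  · have hb0 : b ≠ 0 := by rintro rfl; exact hgc (by simp [← hb, hn])
    simpa [div_self hgc] using hb0
  · rw [mul_pow, cpow_nat_inv_pow _ hn, hb, mul_div_cancel₀ _ hgc]

lemma exists_ne_pow_eq_pow {s : Set ℂ} (hs : s ∈ 𝓝 0) {n : ℕ} (hn : 2 ≤ n) :
    ∃ w₁ ∈ s, ∃ w₂ ∈ s, w₁ ≠ w₂ ∧ w₁ ^ n = w₂ ^ n := by
  have hζ := isPrimitiveRoot_exp n (by omega)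
  set ζ := exp (2 * Real.pi * I / n)
  have hζs : ∀ᶠ w in 𝓝 (0 : ℂ), w ∈ s ∧ ζ * w ∈ s :=
    Filter.inter_mem hs
      ((continuous_const_mul ζ).continuousAt.preimage_mem_nhds (by simpa using hs))
  obtain ⟨w, ⟨hw, hζw⟩, hw0⟩ :=
    ((hζs.filter_mono nhdsWithin_le_nhds).and self_mem_nhdsWithin).exists (f := 𝓝[≠] (0 : ℂ))
  refine ⟨w, hw, ζ * w, hζw, fun h => hζ.ne_one (by omega) ((mul_eq_right₀ hw0).mp h.symm), ?_⟩
  rw [mul_pow, hζ.pow_eq_one, one_mul]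

lemma not_injOn_of_eventually_eq_add_pow {f ρ : ℂ → ℂ} {s : Set ℂ} {c : ℂ} {n : ℕ}
    (hn : 2 ≤ n) (hρ : map ρ (𝓝 c) = 𝓝 0) (hfρ : ∀ᶠ z in 𝓝 c, f z = f c + ρ z ^ n)
    (hs : s ∈ 𝓝 c) : ¬ InjOn f s := by
  intro hinj
  have hU : ρ '' {z | z ∈ s ∧ f z = f c + ρ z ^ n} ∈ 𝓝 0 :=
    hρ ▸ image_mem_map (Filter.inter_mem hs hfρ)
  obtain ⟨_, ⟨z₁, ⟨hz₁, hf₁⟩, rfl⟩, _, ⟨z₂, ⟨hz₂, hf₂⟩, rfl⟩, hne, hpow⟩ :=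
    exists_ne_pow_eq_pow hU hn
  exact hne (congrArg ρ (hinj hz₁ hz₂ (by rw [hf₁, hf₂, hpow])))

/- If `f' c = 0`, then near `c` we have `f = f c + ρ ^ n` with `n ≥ 2` and `ρ` a local
biholomorphism, so `f` is `n`-to-one near `c`. -/
lemma AnalyticAt.deriv_ne_zero_of_injOn {f : ℂ → ℂ} {s : Set ℂ} {c : ℂ} (hf : AnalyticAt ℂ f c)
    (hs : s ∈ 𝓝 c) (hinj : InjOn f s) : deriv f c ≠ 0 := by
  intro hf'
  have hord : 2 ≤ analyticOrderAt (f · - f c) c := by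
    rw [← hf.analyticOrderAt_deriv_add_one, one_add_one_eq_two.symm]
    gcongr
    exact Order.one_le_iff_ne_zero.mpr (analyticOrderAt_ne_zero.mpr ⟨hf.deriv, hf'⟩)
  cases hn : analyticOrderAt (f · - f c) c with
  | top =>
    have hconst : ∀ᶠ z in 𝓝 c, z ∈ s ∧ f z - f c = 0 :=
      Filter.inter_mem hs (analyticOrderAt_eq_top.mp hn)
    obtain ⟨z, ⟨hz, hfz⟩, hzc⟩ :=
      ((hconst.filter_mono nhdsWithin_le_nhds).and self_mem_nhdsWithin).exists (f := 𝓝[≠] c)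
    exact hzc (hinj hz (mem_of_mem_nhds hs) (sub_eq_zero.mp hfz))
  | coe n =>
    have hn2 : 2 ≤ n := by rw [hn] at hord; exact_mod_cast hord
    obtain ⟨g, hg, hgc, hfg⟩ := (hf.sub analyticAt_const).analyticOrderAt_eq_natCast.mp hn
    obtain ⟨h, hh, hhc, hhg⟩ := hg.exists_analyticAt_pow_eq hgc (n := n) (by omega)
    have hρ : HasStrictDerivAt (fun z => (z - c) * h z) (h c) c := by
      simpa using HasStrictDerivAt.fun_mul ((hasStrictDerivAt_id c).sub_const c) hh.hasStrictDerivAt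
    refine not_injOn_of_eventually_eq_add_pow hn2
      (by simpa using hρ.map_nhds_eq hhc) ?_ hs hinj
    filter_upwards [hfg] with z hz
    rw [mul_pow, hhg, ← smul_eq_mul, ← hz, Pi.sub_apply, add_sub_cancel]

lemma mul_norm_deriv_le_diam_image {f : ℂ → ℂ} {s : Set ℂ} {c : ℂ} {R : ℝ} (hR : 0 < R)
    (hs : ball c R ⊆ s) (hd : DifferentiableOn ℂ f s) (hb : Bornology.IsBounded (f '' s)) :
    R * ‖deriv f c‖ ≤ diam (f '' s) := by
  have hmaps : MapsTo f (ball c R) (closedBall (f c) (diam (f '' s))) := fun z hz =>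
    dist_le_diam_of_mem hb (mem_image_of_mem f (hs hz)) (mem_image_of_mem f (hs (mem_ball_self hR)))
  have := norm_deriv_le_div_of_mapsTo_ball (hd.mono hs) hmaps hR
  rwa [le_div_iff₀ hR, mul_comm] at this

lemma mul_norm_deriv_le_of_norm_le {f : ℂ → ℂ} {c : ℂ} {R M : ℝ} (hR : 0 < R)
    (hd : DifferentiableOn ℂ f (ball c R)) (hM : ∀ z ∈ ball c R, ‖f z‖ ≤ M * ‖f c‖) :
    R * ‖deriv f c‖ ≤ (M + 1) * ‖f c‖ := by
  have hmaps : MapsTo f (ball c R) (closedBall (f c) ((M + 1) * ‖f c‖)) := fun z hz => by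
    rw [mem_closedBall, dist_eq_norm]
    linarith [norm_sub_le (f z) (f c), hM z hz]
  have := norm_deriv_le_div_of_mapsTo_ball hd hmaps hR
  rwa [le_div_iff₀ hR, mul_comm] at this

lemma isBigO_principal_of_le_mul {α : Type*} {s : Set α} {f g : α → ℝ} (c : ℝ)
    (hf : ∀ x ∈ s, 0 ≤ f x) (hg : ∀ x ∈ s, 0 ≤ g x) (h : ∀ x ∈ s, f x ≤ c * g x) :
    f =O[𝓟 s] g :=
  isBigO_principal.mpr ⟨c, fun x hx => by
    rw [Real.norm_of_nonneg (hf x hx), Real.norm_of_nonneg (hg x hx)]; exact h x hx⟩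

lemma isBigO_principal_Ici_of_Icc_of_Ici {E F : Type*} [Norm E] [SeminormedAddCommGroup F]
    {f : ℝ → E} {g : ℝ → F} {a b : ℝ} (h₁ : f =O[𝓟 (Icc a b)] g) (h₂ : f =O[𝓟 (Ici b)] g) : f =O[𝓟 (Ici a)] g := by
  refine (h₁.sup h₂).mono ?_
  rw [sup_principal, principal_mono]
  intro x hx
  rcases le_total x b with hxb | hbx
  exacts [Or.inl ⟨hx, hxb⟩, Or.inr hbx]

lemma Asymptotics.IsTheta.eventually_forall_le_principal {α : Type*} {s : Set α} {f g : α → ℝ}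
    (hf : ∀ x ∈ s, 0 ≤ f x) (hg : ∀ x ∈ s, 0 ≤ g x) (h : f =Θ[𝓟 s] g) :
    ∀ᶠ C in atTop, ∀ x ∈ s, C⁻¹ * g x ≤ f x ∧ f x ≤ C * g x := by
  obtain ⟨a, ha⟩ := isBigO_principal.mp h.1
  obtain ⟨b, hb⟩ := isBigO_principal.mp h.2
  filter_upwards [eventually_ge_atTop (max (max a b) 1)] with C hC x hx
  have hC₀ : 0 < C := by linarith [le_max_right (max a b) 1]
  have hfx := ha x hx
  have hgx := hb x hx
  rw [Real.norm_of_nonneg (hf x hx), Real.norm_of_nonneg (hg x hx)] at hfx hgx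
  refine ⟨(inv_mul_le_iff₀ hC₀).mpr ?_, ?_⟩
  · exact hgx.trans (mul_le_mul_of_nonneg_right (by grind) (hf x hx))
  · exact hfx.trans (mul_le_mul_of_nonneg_right (by grind) (hg x hx))

lemma isOpen_halfPlane : IsOpen HalfPlane :=
  isOpen_lt continuous_const continuous_re

lemma ofReal_mem_halfPlane {t : ℝ} (ht : 0 < t) : (t : ℂ) ∈ HalfPlane := by
  simpa [HalfPlane] using ht

lemma Q_subset_halfPlane (T : ℝ) : Q T ⊆ HalfPlane := fun _ hz => hz.1

lemma Q_mono {T T' : ℝ} (h : T ≤ T') : Q T ⊆ Q T' := by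
  rintro z ⟨h₁, h₂, h₃, h₄⟩
  exact ⟨h₁, by linarith, by linarith, by linarith⟩

lemma ofReal_mem_Q {t T : ℝ} (h₀ : 0 < t) (h₁ : t < 4 * T) : (t : ℂ) ∈ Q T :=
  ⟨by simpa using h₀, by simpa using h₁, by simp; linarith, by simp; linarith⟩

lemma ball_subset_Q (T : ℝ) : ball (T : ℂ) T ⊆ Q T := by
  intro z hz
  rw [mem_ball, dist_eq] at hz
  have hre := abs_lt.mp ((abs_re_le_norm (z - T)).trans_lt hz)
  have him := abs_lt.mp ((abs_im_le_norm (z - T)).trans_lt hz)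
  simp only [sub_re, sub_im, ofReal_re, ofReal_im, sub_zero] at hre him
  exact ⟨by linarith, by linarith, by linarith, by linarith⟩

lemma ball_subset_Q_diff (T : ℝ) : ball (T : ℂ) (T / 2) ⊆ Q T \ Q (T / 8) := by
  intro z hz
  have hre := abs_lt.mp ((abs_re_le_norm (z - T)).trans_lt (mem_ball_iff_norm.mp hz))
  simp only [sub_re, ofReal_re] at hre
  refine ⟨ball_subset_Q T (ball_subset_ball (by linarith) hz), fun hQ => ?_⟩
  linarith [hQ.2.1]

lemma div_mem_Q_one {T : ℝ} (hT : 0 < T) {z : ℂ} (hz : z ∈ Q T) : z / T ∈ Q 1 := by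
  obtain ⟨h₁, h₂, h₃, h₄⟩ := hz
  simp only [Q, mem_ofPred_eq, div_ofReal_re, div_ofReal_im, mul_one, lt_div_iff₀ hT,
    div_lt_iff₀ hT]
  exact ⟨by linarith, by linarith, by linarith, by linarith⟩

lemma norm_sub_le_of_mem_Q_one {z₁ z₂ : ℂ} (h₁ : z₁ ∈ Q 1) (h₂ : z₂ ∈ Q 1) : ‖z₁ - z₂‖ ≤ 12 := by
  obtain ⟨a₁, a₂, a₃, a₄⟩ := h₁
  obtain ⟨b₁, b₂, b₃, b₄⟩ := h₂
  refine (norm_le_abs_re_add_abs_im _).trans ?_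
  simp only [sub_re, sub_im]
  have hre : |z₁.re - z₂.re| ≤ 4 := abs_le.mpr ⟨by linarith, by linarith⟩
  have him : |z₁.im - z₂.im| ≤ 8 := abs_le.mpr ⟨by linarith, by linarith⟩
  linarith

lemma one_isBigO_diam_image_Q {φ : ℂ → ℂ} (hi : InjOn φ HalfPlane)
    (hb : ∀ T, Bornology.IsBounded (φ '' Q T)) :
    (fun _ => (1 : ℝ)) =O[𝓟 (Ici 1)] fun T => diam (φ '' Q T) := by
  have h12 : 0 < ‖φ 1 - φ 2‖ := norm_pos_iff.mpr <| sub_ne_zero.mpr <|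
    hi.ne (by simp [HalfPlane]) (by simp [HalfPlane]) (by norm_num)
  refine isBigO_principal_of_le_mul ‖φ 1 - φ 2‖⁻¹ (fun _ _ => zero_le_one)
    (fun _ _ => diam_nonneg) fun T hT => ?_
  rw [← div_eq_inv_mul, one_le_div h12]
  have hTQ : ∀ t : ℝ, 0 < t → t < 4 * T → φ t ∈ φ '' Q T := fun t ht ht' =>
    mem_image_of_mem φ (ofReal_mem_Q ht ht')
  simpa [dist_eq_norm] using dist_le_diam_of_mem (hb T)
    (hTQ 1 one_pos (by linarith [mem_Ici.mp hT])) (hTQ 2 two_pos (by linarith [mem_Ici.mp hT]))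

lemma Cond42.mul_norm_deriv_le {φ : ℂ → ℂ} {M γ T : ℝ} (h42 : Cond42 φ M γ)
    (hd : DifferentiableOn ℂ φ HalfPlane) (hγ : γ ≤ T) (hT : 0 < T) :
    T * ‖deriv φ T‖ ≤ 2 * (M + 1) * ‖φ T‖ := by
  have hTQ : (T : ℂ) ∈ Q T \ Q (T / 8) := ball_subset_Q_diff T (mem_ball_self (half_pos hT))
  have := mul_norm_deriv_le_of_norm_le (half_pos hT)
    (hd.mono ((ball_subset_Q_diff T).trans (sdiff_subset.trans (Q_subset_halfPlane T))))
    (fun z hz => h42 T hγ z (ball_subset_Q_diff T hz) T hTQ)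
  linarith

namespace HolderTract

variable {φ : ℂ → ℂ} {M H α T₀ : ℝ}

lemma norm_sub_le (hφ : HolderTract φ H α T₀) (hH : 0 ≤ H) (hα : 0 ≤ α) (hα₁ : α ≤ 1) {T : ℝ}
    (hT₀ : T₀ ≤ T) (hT : 0 < T) {z₁ z₂ : ℂ} (h₁ : z₁ ∈ Q T) (h₂ : z₂ ∈ Q T) :
    ‖φ z₁ - φ z₂‖ ≤ 12 * H * (T * ‖deriv φ T‖) := by
  have hT' : (T : ℂ) ≠ 0 := ofReal_ne_zero.mpr hT.ne'
  have key := hφ T hT₀ _ (div_mem_Q_one hT h₁) _ (div_mem_Q_one hT h₂)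
  rw [mul_div_cancel₀ _ hT', mul_div_cancel₀ _ hT'] at key
  have h12 : ‖z₁ / T - z₂ / T‖ ^ α ≤ 12 := calc
    _ ≤ (12 : ℝ) ^ α :=
      Real.rpow_le_rpow (norm_nonneg _)
        (norm_sub_le_of_mem_Q_one (div_mem_Q_one hT h₁) (div_mem_Q_one hT h₂)) hα
    _ ≤ 12 ^ (1 : ℝ) := Real.rpow_le_rpow_of_exponent_le (by norm_num) hα₁
    _ = 12 := Real.rpow_one 12
  calc _ ≤ H * T * ‖deriv φ T‖ * 12 := key.trans (mul_le_mul_of_nonneg_left h12 (by positivity))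
    _ = _ := by ring

lemma isBounded_image_Q (hφ : HolderTract φ H α T₀) (hH : 0 ≤ H) (hα : 0 ≤ α) (hα₁ : α ≤ 1)
    (T : ℝ) : Bornology.IsBounded (φ '' Q T) := by
  set S := max T (max T₀ 1)
  have hS : 0 < S := lt_max_of_lt_right (lt_max_of_lt_right one_pos)
  refine (isBounded_closedBall (x := φ S) (r := 12 * H * (S * ‖deriv φ S‖))).subset ?_
  rintro _ ⟨z, hz, rfl⟩
  rw [mem_closedBall, dist_eq_norm]
  exact hφ.norm_sub_le hH hα hα₁ (le_max_of_le_right (le_max_left _ _)) hS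
    (Q_mono (le_max_left _ _) hz) (ofReal_mem_Q hS (by linarith))

lemma diam_image_Q_le (hφ : HolderTract φ H α T₀) (hH : 0 ≤ H) (hα : 0 ≤ α) (hα₁ : α ≤ 1)
    {T : ℝ} (hT₀ : T₀ ≤ T) (hT : 0 < T) :
    diam (φ '' Q T) ≤ 12 * H * (T * ‖deriv φ T‖) := by
  refine diam_le_of_forall_dist_le (by positivity) ?_
  rintro _ ⟨z₁, h₁, rfl⟩ _ ⟨z₂, h₂, rfl⟩
  rw [dist_eq_norm]
  exact hφ.norm_sub_le hH hα hα₁ hT₀ hT h₁ h₂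

lemma norm_sub_one_le (hφ : HolderTract φ H α T₀) (hH : 0 ≤ H) (hα : 0 ≤ α) {T : ℝ}
    (hT₀ : T₀ ≤ T) (hT : 1 ≤ T) : ‖φ T - φ 1‖ ≤ H * (T * ‖deriv φ T‖) := by
  have hT' : (T : ℂ) ≠ 0 := ofReal_ne_zero.mpr (by positivity)
  have h₁ : (1 : ℂ) ∈ Q 1 := by simpa using ofReal_mem_Q (T := 1) one_pos (by norm_num)
  have h₁T : (1 : ℂ) ∈ Q T := Q_mono hT h₁
  have key := hφ T hT₀ _ h₁ _ (div_mem_Q_one (by positivity) h₁T)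
  rw [mul_one, mul_div_cancel₀ _ hT'] at key
  have hdist : ‖1 - 1 / (T : ℂ)‖ ≤ 1 := by
    rw [← ofReal_one, ← ofReal_div, ← ofReal_sub, norm_real, Real.norm_eq_abs, abs_le]
    have : 1 / T ≤ 1 := (div_le_one (by positivity)).mpr hT
    constructor <;> linarith [one_div_pos.mpr (by positivity : 0 < T)]
  calc _ ≤ H * T * ‖deriv φ T‖ * 1 :=
        key.trans (mul_le_mul_of_nonneg_left (Real.rpow_le_one (norm_nonneg _) hdist hα)
          (by positivity))
    _ = _ := by ring

lemma isTheta_diam_mul_norm_deriv (hφ : HolderTract φ H α T₀) (hH : 0 ≤ H) (hα : 0 ≤ α)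
    (hα₁ : α ≤ 1) (hT₀ : 0 < T₀) (hd : DifferentiableOn ℂ φ HalfPlane)
    (hi : InjOn φ HalfPlane) :
    (fun T => diam (φ '' Q T)) =Θ[𝓟 (Ici 1)] fun T : ℝ => T * ‖deriv φ T‖ := by
  have hb := hφ.isBounded_image_Q hH hα hα₁
  have hP : ∀ T : ℝ, 0 < T → 0 ≤ T * ‖deriv φ T‖ := fun T hT => by positivity
  have hD : ∀ T : ℝ, 0 ≤ diam (φ '' Q T) := fun T => diam_nonneg
  have hdiam : (fun T => diam (φ '' Q T)) =O[𝓟 (Icc 1 T₀)] fun _ => (1 : ℝ) :=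
    isBigO_principal_of_le_mul (diam (φ '' Q T₀)) (fun T _ => hD T) (fun _ _ => zero_le_one)
      fun T hT => by simpa using diam_mono (image_mono (Q_mono hT.2)) (hb T₀)
  have hcont : ContinuousOn (fun T : ℝ => T * ‖deriv φ T‖) (Icc 1 T₀) :=
    continuousOn_id.mul ((hd.deriv isOpen_halfPlane).continuousOn.comp
      continuous_ofReal.continuousOn fun T hT => ofReal_mem_halfPlane (by linarith [hT.1])).norm
  have hne : ∀ T ∈ Icc (1 : ℝ) T₀, T * ‖deriv φ T‖ ≠ 0 := fun T hT => by
    have hT_mem := isOpen_halfPlane.mem_nhds (ofReal_mem_halfPlane (t := T) (by linarith [hT.1]))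
    exact mul_ne_zero (by linarith [hT.1]) (norm_ne_zero_iff.mpr
      ((hd.analyticAt hT_mem).deriv_ne_zero_of_injOn hT_mem hi))
  refine ⟨isBigO_principal_Ici_of_Icc_of_Ici (b := T₀)
    (hdiam.trans (hcont.isBigO_rev_principal isCompact_Icc hne 1)) ?_, ?_⟩
  · exact isBigO_principal_of_le_mul (12 * H) (fun T _ => hD T)
      (fun T hT => hP T (hT₀.trans_le (mem_Ici.mp hT)))
      fun T hT => hφ.diam_image_Q_le hH hα hα₁ hT (hT₀.trans_le hT)
  · exact isBigO_principal_of_le_mul 1 (fun T hT => hP T (zero_lt_one.trans_le (mem_Ici.mp hT)))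
      (fun T _ => hD T) fun T hT => by
        rw [one_mul]
        exact mul_norm_deriv_le_diam_image (zero_lt_one.trans_le hT) (ball_subset_Q T)
          (hd.mono (Q_subset_halfPlane T)) (hb T)

lemma isTheta_diam_norm (hφ : HolderTract φ H α T₀) (hH : 0 ≤ H) (hα : 0 ≤ α) (hα₁ : α ≤ 1)
    (hT₀ : 1 ≤ T₀) (hd : DifferentiableOn ℂ φ HalfPlane) (hi : InjOn φ HalfPlane)
    (h42 : Cond42 φ M 1) :
    (fun T => diam (φ '' Q T)) =Θ[𝓟 (Ici 1)] fun T : ℝ => ‖φ T‖ := by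
  have hb := hφ.isBounded_image_Q hH hα hα₁
  have hDP := hφ.isTheta_diam_mul_norm_deriv hH hα hα₁ (by linarith) hd hi
  have hPA : (fun T : ℝ => T * ‖deriv φ T‖) =O[𝓟 (Ici 1)] fun T : ℝ => ‖φ T‖ :=
    isBigO_principal_of_le_mul (2 * (M + 1))
      (fun T hT => by have : (0 : ℝ) < T := zero_lt_one.trans_le hT; positivity)
      (fun _ _ => norm_nonneg _) fun T hT => h42.mul_norm_deriv_le hd hT (zero_lt_one.trans_le hT)
  have hone := one_isBigO_diam_image_Q hi hb
  refine ⟨hDP.1.trans hPA, isBigO_principal_Ici_of_Icc_of_Ici (b := T₀) ?_ ?_⟩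
  · have hcont : ContinuousOn (fun T : ℝ => ‖φ T‖) (Icc 1 T₀) :=
      (hd.continuousOn.comp continuous_ofReal.continuousOn
        fun T hT => ofReal_mem_halfPlane (by linarith [hT.1])).norm
    exact (hcont.isBigO_principal isCompact_Icc (c := (1 : ℝ)) (by norm_num)).trans
      (hone.mono (principal_mono.mpr Icc_subset_Ici_self))
  · have hsub : (fun T : ℝ => φ T - φ 1) =O[𝓟 (Ici T₀)] fun T : ℝ => T * ‖deriv φ T‖ :=
      isBigO_principal.mpr ⟨H, fun T hT => by
        have : (1 : ℝ) ≤ T := hT₀.trans hT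
        rw [Real.norm_of_nonneg (by positivity)]
        exact hφ.norm_sub_one_le hH hα hT this⟩
    have hmono : 𝓟 (Ici T₀) ≤ 𝓟 (Ici (1 : ℝ)) := principal_mono.mpr (Ici_subset_Ici.mpr hT₀)
    have hconst := (isBigO_const_one ℝ (φ 1) (𝓟 (Ici T₀))).trans (hone.mono hmono)
    exact ((hconst.add (hsub.trans (hDP.2.mono hmono))).congr_left
      fun T => add_sub_cancel (φ 1) (φ T)).norm_left

end HolderTract

theorem holder_tract_diam_general (M H α T₀ : ℝ) (hH : 1 ≤ H)
    (hα : α ∈ Ioc (0 : ℝ) 1) (hT₀ : 1 ≤ T₀)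
    (φ : ℂ → ℂ) (hd : DifferentiableOn ℂ φ HalfPlane) (hi : InjOn φ HalfPlane)
    (h42 : Cond42 φ M 1) (hht : HolderTract φ H α T₀) :
    ∃ c C : ℝ, 0 < c ∧ c ≤ C ∧ ∀ T : ℝ, 1 ≤ T →
      (c * ‖φ (T : ℂ)‖ ≤ Metric.diam (φ '' Q T) ∧
        Metric.diam (φ '' Q T) ≤ C * ‖φ (T : ℂ)‖) ∧
      (c * (T * ‖deriv φ (T : ℂ)‖) ≤ Metric.diam (φ '' Q T) ∧
        Metric.diam (φ '' Q T) ≤ C * (T * ‖deriv φ (T : ℂ)‖)) := by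
  obtain ⟨hα₀, hα₁⟩ := hα
  have hH₀ : 0 ≤ H := by linarith
  have hD : ∀ T ∈ Ici (1 : ℝ), 0 ≤ diam (φ '' Q T) := fun _ _ => diam_nonneg
  have hA := (hht.isTheta_diam_norm hH₀ hα₀.le hα₁ hT₀ hd hi h42).eventually_forall_le_principal
    hD fun _ _ => norm_nonneg _
  have hP := (hht.isTheta_diam_mul_norm_deriv hH₀ hα₀.le hα₁ (by linarith) hd hi
    ).eventually_forall_le_principal hD fun T hT => by
      have : (0 : ℝ) < T := zero_lt_one.trans_le hT; positivity
  obtain ⟨C, ⟨hCA, hCP⟩, hC⟩ := ((hA.and hP).and (eventually_ge_atTop 1)).exists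
  exact ⟨C⁻¹, C, by positivity, (inv_le_one_of_one_le₀ hC).trans hC,
    fun T hT => ⟨hCA T hT, hCP T hT⟩⟩

/-- **Lemma (diameter of a Hölder tract).**  For a Hölder tract,
`|φ(T)| ≍ diam(φ(Q_T)) ≍ T·|φ′(T)|` for all `T ≥ 1`. -/
theorem holder_tract_diam (M H α T₀ : ℝ) (hM : 1 ≤ M) (hH : 1 ≤ H)
    (hα : α ∈ Ioc (0 : ℝ) 1) (hT₀ : 1 ≤ T₀)
    (φ : ℂ → ℂ) (hd : DifferentiableOn ℂ φ HalfPlane) (hi : InjOn φ HalfPlane)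
    (h42 : Cond42 φ M 1) (hht : HolderTract φ H α T₀) :
    ∃ c C : ℝ, 0 < c ∧ c ≤ C ∧ ∀ T : ℝ, 1 ≤ T →
      (c * ‖φ (T : ℂ)‖ ≤ Metric.diam (φ '' Q T) ∧
        Metric.diam (φ '' Q T) ≤ C * ‖φ (T : ℂ)‖) ∧
      (c * (T * ‖deriv φ (T : ℂ)‖) ≤ Metric.diam (φ '' Q T) ∧
        Metric.diam (φ '' Q T) ≤ C * (T * ‖deriv φ (T : ℂ)‖)) :=
  holder_tract_diam_general M H α T₀ hH hα hT₀ φ hd hi h42 hht
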